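/- arXiv:math/0210397 — 3 statements merged into one kernel-verified Lean document; each statement's English description precedes it below -/
import Mathlib

section
/- Let ψ, φ, χ : ℝ → ℝ be circle diffeomorphisms and define the Bott cocycle B(ψ,φ) = ∫₀^{2π} log(ψ'(φ(x))·φ'(x)) · (φ''(x)/φ'(x)) dx. Then B(ψ,φ) + B(ψ∘φ, χ) = B(φ,χ) + B(ψ, φ∘χ); equivalently, the multiplication (ψ,a)∘(φ,b) = (ψ∘φ, a+b+B(ψ,φ)) on pairs of a circle diffeomorphism and a real number is associative. -/
open Real

/-- A circle diffeomorphism, modeled by a smooth map `φ : ℝ → ℝ` with positive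
derivative satisfying `φ(x + 2π) = φ(x) + 2π`. -/
def IsCircleDiffeo (φ : ℝ → ℝ) : Prop :=
  ContDiff ℝ (⊤ : ℕ∞) φ ∧ (∀ x : ℝ, 0 < deriv φ x) ∧ ∀ x : ℝ, φ (x + 2 * π) = φ x + 2 * π

/-- The Bott cocycle `B(ψ,φ) = ∫₀^{2π} log((ψ∘φ)') d log(φ')`. -/
noncomputable def bott (ψ φ : ℝ → ℝ) : ℝ :=
  ∫ x in (0:ℝ)..(2 * π),
    Real.log (deriv ψ (φ x) * deriv φ x) * (iteratedDeriv 2 φ x / deriv φ x)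

namespace BottAux

/-- The log-derivative of a diffeomorphism. -/
noncomputable def L (φ : ℝ → ℝ) : ℝ → ℝ := fun x => Real.log (deriv φ x)

variable {φ ψ χ : ℝ → ℝ}

lemma diff (h : IsCircleDiffeo φ) : Differentiable ℝ φ := h.1.differentiable (by simp)

lemma deriv_diff (h : IsCircleDiffeo φ) : Differentiable ℝ (deriv φ) :=
  ((contDiff_infty_iff_deriv.mp (h.1.of_le (by simp))).2).differentiable (by norm_num)

lemma deriv_cont (h : IsCircleDiffeo φ) : Continuous (deriv φ) :=
  (deriv_diff h).continuous

lemma iter2_eq : iteratedDeriv 2 φ = deriv (deriv φ) := by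
  simp [iteratedDeriv_succ, iteratedDeriv_zero]

lemma iter2_cont (h : IsCircleDiffeo φ) : Continuous (iteratedDeriv 2 φ) := by
  rw [iter2_eq]
  exact (((contDiff_infty_iff_deriv.mp
    ((contDiff_infty_iff_deriv.mp (h.1.of_le (by simp))).2)).2)).continuous

lemma periodic_of_quasi (h : ∀ x : ℝ, φ (x + 2 * π) = φ x + 2 * π) :
    Function.Periodic (deriv φ) (2 * π) := by
  intro x
  rw [← deriv_comp_add_const φ (2 * π) x]
  have : (fun y => φ (y + 2 * π)) = fun y => φ y + 2 * π := funext fun y => h y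
  rw [this, deriv_add_const]

lemma periodic_deriv (h : Function.Periodic φ (2 * π)) :
    Function.Periodic (deriv φ) (2 * π) := by
  intro x
  rw [← deriv_comp_add_const φ (2 * π) x]
  have : (fun y => φ (y + 2 * π)) = φ := funext fun y => h y
  rw [this]

lemma comp_diffeo (hψ : IsCircleDiffeo ψ) (hφ : IsCircleDiffeo φ) :
    IsCircleDiffeo (ψ ∘ φ) := by
  refine ⟨hψ.1.comp hφ.1, fun x => ?_, fun x => ?_⟩
  · rw [deriv_comp x (diff hψ (φ x)) (diff hφ x)]
    exact mul_pos (hψ.2.1 _) (hφ.2.1 _)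
  · simp only [Function.comp_apply, hφ.2.2 x, hψ.2.2 (φ x)]

lemma hasDerivAt_L (h : IsCircleDiffeo φ) (x : ℝ) :
    HasDerivAt (L φ) (iteratedDeriv 2 φ x / deriv φ x) x := by
  have h1 : HasDerivAt (deriv φ) (iteratedDeriv 2 φ x) x := by
    rw [iter2_eq]
    exact (deriv_diff h x).hasDerivAt
  exact h1.log (h.2.1 x).ne'

/-- First rewriting of the Bott integrand: split the logarithm. -/
lemma bott_eq (hψ : IsCircleDiffeo ψ) (hφ : IsCircleDiffeo φ) :
    bott ψ φ = ∫ x in (0:ℝ)..(2 * π),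
      (Real.log (deriv ψ (φ x)) + Real.log (deriv φ x)) *
        (iteratedDeriv 2 φ x / deriv φ x) := by
  unfold bott
  congr 1
  funext x
  rw [Real.log_mul (hψ.2.1 _).ne' (hφ.2.1 _).ne']

end BottAux

open BottAux

/-- The Bott cocycle identity: `B(ψ,φ) + B(ψ∘φ, χ) = B(φ,χ) + B(ψ, φ∘χ)`,
i.e. the multiplication `(ψ,a)∘(φ,b) = (ψ∘φ, a+b+B(ψ,φ))` on the Virasoro
group is associative. -/
theorem bott_cocycle (ψ φ χ : ℝ → ℝ)
    (hψ : IsCircleDiffeo ψ) (hφ : IsCircleDiffeo φ) (hχ : IsCircleDiffeo χ) :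
    bott ψ φ + bott (ψ ∘ φ) χ = bott φ χ + bott ψ (φ ∘ χ) := by
  have hψφ : IsCircleDiffeo (ψ ∘ φ) := comp_diffeo hψ hφ
  have hφχ : IsCircleDiffeo (φ ∘ χ) := comp_diffeo hφ hχ
  -- notation
  set f : ℝ → ℝ := fun x => Real.log (deriv ψ (φ (χ x))) with hf
  set g : ℝ → ℝ := fun x => Real.log (deriv φ (χ x)) with hg
  set h : ℝ → ℝ := fun x => Real.log (deriv χ x) with hh
  set g' : ℝ → ℝ := fun x => iteratedDeriv 2 φ (χ x) / deriv φ (χ x) * deriv χ x with hg'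
  set h' : ℝ → ℝ := fun x => iteratedDeriv 2 χ x / deriv χ x with hh'
  -- derivative facts
  have hgd : ∀ x, HasDerivAt g (g' x) x := fun x =>
    (hasDerivAt_L hφ (χ x)).comp x (diff hχ x).hasDerivAt
  have hhd : ∀ x, HasDerivAt h (h' x) x := fun x => hasDerivAt_L hχ x
  -- continuity facts
  have hχc : Continuous χ := (diff hχ).continuous
  have hfc : Continuous f :=
    ((deriv_cont hψ).comp ((diff hφ).continuous.comp hχc)).log
      fun x => (hψ.2.1 _).ne'
  have hgc : Continuous g :=
    ((deriv_cont hφ).comp hχc).log fun x => (hφ.2.1 _).ne'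
  have hhc : Continuous h := (deriv_cont hχ).log fun x => (hχ.2.1 _).ne'
  have hg'c : Continuous g' :=
    (((iter2_cont hφ).comp hχc).div ((deriv_cont hφ).comp hχc)
      fun x => (hφ.2.1 _).ne').mul (deriv_cont hχ)
  have hh'c : Continuous h' :=
    (iter2_cont hχ).div (deriv_cont hχ) fun x => (hχ.2.1 _).ne'
  -- chain rule for deriv of composites
  have dcomp : ∀ y, deriv (ψ ∘ φ) y = deriv ψ (φ y) * deriv φ y := fun y =>
    deriv_comp y (diff hψ (φ y)) (diff hφ y)
  have dcomp2 : ∀ y, deriv (φ ∘ χ) y = deriv φ (χ y) * deriv χ y := fun y =>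
    deriv_comp y (diff hφ (χ y)) (diff hχ y)
  -- E1 : bott φ χ
  have E1 : bott φ χ = ∫ x in (0:ℝ)..(2 * π), (g x + h x) * h' x := bott_eq hφ hχ
  -- E2 : bott (ψ∘φ) χ
  have E2 : bott (ψ ∘ φ) χ = ∫ x in (0:ℝ)..(2 * π), (f x + g x + h x) * h' x := by
    rw [bott_eq hψφ hχ]
    congr 1
    funext x
    rw [dcomp (χ x), Real.log_mul (hψ.2.1 _).ne' (hφ.2.1 _).ne']
  -- E3 : bott ψ (φ∘χ)
  have E3 : bott ψ (φ ∘ χ) = ∫ x in (0:ℝ)..(2 * π), (f x + g x + h x) * (g' x + h' x) := by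
    rw [bott_eq hψ hφχ]
    congr 1
    funext x
    have hL : L (φ ∘ χ) = fun y => g y + h y := by
      funext y
      show Real.log (deriv (φ ∘ χ) y) = _
      rw [dcomp2 y, Real.log_mul (hφ.2.1 _).ne' (hχ.2.1 _).ne']
    have h1 : HasDerivAt (L (φ ∘ χ)) (iteratedDeriv 2 (φ ∘ χ) x / deriv (φ ∘ χ) x) x :=
      hasDerivAt_L hφχ x
    have h2 : HasDerivAt (L (φ ∘ χ)) (g' x + h' x) x := by
      rw [hL]; exact (hgd x).add (hhd x)
    rw [h1.unique h2, Function.comp_apply, dcomp2 x,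
      Real.log_mul (hφ.2.1 _).ne' (hχ.2.1 _).ne']
    ring
  -- E4 : bott ψ φ, via periodicity and change of variables
  have E4 : bott ψ φ = ∫ x in (0:ℝ)..(2 * π), (f x + g x) * g' x := by
    rw [bott_eq hψ hφ]
    set F : ℝ → ℝ := fun x =>
      (Real.log (deriv ψ (φ x)) + Real.log (deriv φ x)) *
        (iteratedDeriv 2 φ x / deriv φ x) with hF
    have hFc : Continuous F := by
      refine Continuous.mul (Continuous.add ?_ ?_) ?_
      · exact ((deriv_cont hψ).comp (diff hφ).continuous).log fun x => (hψ.2.1 _).ne'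
      · exact (deriv_cont hφ).log fun x => (hφ.2.1 _).ne'
      · exact (iter2_cont hφ).div (deriv_cont hφ) fun x => (hφ.2.1 _).ne'
    have hψper : Function.Periodic (deriv ψ) (2 * π) := periodic_of_quasi hψ.2.2
    have hφper : Function.Periodic (deriv φ) (2 * π) := periodic_of_quasi hφ.2.2
    have hφ2per : Function.Periodic (iteratedDeriv 2 φ) (2 * π) := by
      rw [iter2_eq]; exact periodic_deriv hφper
    have hFper : Function.Periodic F (2 * π) := by
      intro x
      simp only [hF, hφ.2.2 x, hψper (φ x), hφper x, hφ2per x]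
    have step1 : ∫ x in (0:ℝ)..(2 * π), F x = ∫ x in (χ 0)..(χ 0 + 2 * π), F x := by
      have := hFper.intervalIntegral_add_eq (χ 0) 0
      rw [zero_add] at this
      exact this.symm
    have hχ2π : χ (2 * π) = χ 0 + 2 * π := by
      have := hχ.2.2 0; rwa [zero_add] at this
    have step2 : ∫ x in (χ 0)..(χ (2 * π)), F x =
        ∫ x in (0:ℝ)..(2 * π), deriv χ x • (F ∘ χ) x := by
      exact (intervalIntegral.integral_comp_smul_deriv
        (fun x _ => (diff hχ x).hasDerivAt) (deriv_cont hχ).continuousOn hFc).symm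
    rw [step1, ← hχ2π, step2]
    congr 1
    funext x
    show deriv χ x * F (χ x) = (f x + g x) * g' x
    simp only [hF]
    ring
  rw [E1, E2, E3, E4]
  -- all integrands are integrable
  have iA : IntervalIntegrable (fun x => (f x + g x) * g' x)
      MeasureTheory.volume 0 (2 * π) := ((hfc.add hgc).mul hg'c).intervalIntegrable _ _
  have iB : IntervalIntegrable (fun x => (f x + g x + h x) * h' x)
      MeasureTheory.volume 0 (2 * π) := (((hfc.add hgc).add hhc).mul hh'c).intervalIntegrable _ _
  have iC : IntervalIntegrable (fun x => (g x + h x) * h' x)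
      MeasureTheory.volume 0 (2 * π) := ((hgc.add hhc).mul hh'c).intervalIntegrable _ _
  have iD : IntervalIntegrable (fun x => (f x + g x + h x) * (g' x + h' x))
      MeasureTheory.volume 0 (2 * π) :=
    (((hfc.add hgc).add hhc).mul (hg'c.add hh'c)).intervalIntegrable _ _
  -- exactness: the difference is the integral of a derivative of a periodic function
  have hGd : ∀ x, HasDerivAt (fun y => g y * h y + h y * h y / 2)
      (g' x * h x + g x * h' x + h x * h' x) x := by
    intro x
    have := ((hgd x).mul (hhd x)).add ((((hhd x).mul (hhd x))).div_const 2)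
    refine this.congr_deriv ?_
    ring
  have hint : IntervalIntegrable (fun x => g' x * h x + g x * h' x + h x * h' x)
      MeasureTheory.volume 0 (2 * π) :=
    (((hg'c.mul hhc).add (hgc.mul hh'c)).add (hhc.mul hh'c)).intervalIntegrable _ _
  have key : ∫ x in (0:ℝ)..(2 * π), (g' x * h x + g x * h' x + h x * h' x) = 0 := by
    rw [intervalIntegral.integral_eq_sub_of_hasDerivAt (fun x _ => hGd x) hint]
    have hgper : g (2 * π) = g 0 := by
      simp only [hg]
      have : χ (2 * π) = χ 0 + 2 * π := by
        have := hχ.2.2 0; rwa [zero_add] at this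
      rw [show (2:ℝ) * π = 0 + 2 * π by ring, hχ.2.2 0,
        periodic_of_quasi hφ.2.2 (χ 0)]
    have hhper : h (2 * π) = h 0 := by
      simp only [hh]
      rw [show (2:ℝ) * π = 0 + 2 * π by ring, periodic_of_quasi hχ.2.2 0]
    rw [hgper, hhper]
    ring
  have comb : (∫ x in (0:ℝ)..(2 * π), (f x + g x) * g' x) +
      (∫ x in (0:ℝ)..(2 * π), (f x + g x + h x) * h' x) -
      ((∫ x in (0:ℝ)..(2 * π), (g x + h x) * h' x) +
       (∫ x in (0:ℝ)..(2 * π), (f x + g x + h x) * (g' x + h' x))) =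
      ∫ x in (0:ℝ)..(2 * π), -(g' x * h x + g x * h' x + h x * h' x) := by
    rw [← intervalIntegral.integral_add iA iB, ← intervalIntegral.integral_add iC iD,
      ← intervalIntegral.integral_sub (iA.add iB) (iC.add iD)]
    congr 1
    funext x
    ring
  rw [intervalIntegral.integral_neg, key, neg_zero] at comb
  linarith
end

section
/- Let V and W be real vector spaces and let B₀, B₁ : V × V → W be bilinear alternating maps (B_k(x,x) = 0 for all x, k = 0,1). Suppose h : ℕ → V is a sequence such that B₀(h₀, f) = 0 for every f ∈ V (h₀ is a Casimir of B₀), and for every j ∈ ℕ and every f ∈ V one has B₀(h_{j+1}, f) + B₁(h_j, f) = 0 (the Lenard recursion). Then the sequence is in involution with respect to both brackets: B₀(h_i, h_j) = 0 and B₁(h_i, h_j) = 0 for all i, j ∈ ℕ. -/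
/-!
The recursion and antisymmetry let an index migrate from one slot of `B₀` to the other:
`B₀(h_{i+1}, h_j) = -B₁(h_i, h_j) = B₁(h_j, h_i) = -B₀(h_{j+1}, h_i) = B₀(h_i, h_{j+1})`.
Moving the whole left index across gives `B₀(h_i, h_j) = B₀(h_0, h_{i+j}) = 0`, and then
`B₁(h_i, h_j) = -B₀(h_{i+1}, h_j) = 0` by the recursion once more.
-/

section Lenard

variable {R M N : Type*} [CommSemiring R] [AddCommMonoid M] [Module R M]
  [AddCommGroup N] [Module R N] {B₀ B₁ : M →ₗ[R] M →ₗ[R] N} {h : ℕ → M}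

theorem lenard_succ_left_eq_succ_right (hB₀ : B₀.IsAlt) (hB₁ : B₁.IsAlt)
    (hrec : ∀ (j : ℕ) (f : M), B₀ (h (j + 1)) f + B₁ (h j) f = 0) (i j : ℕ) :
    B₀ (h (i + 1)) (h j) = B₀ (h i) (h (j + 1)) := by
  have hrec' (j : ℕ) (f : M) : B₀ (h (j + 1)) f = -B₁ (h j) f :=
    eq_neg_of_add_eq_zero_left (hrec j f)
  calc B₀ (h (i + 1)) (h j) = -B₁ (h i) (h j) := hrec' i (h j)
    _ = B₁ (h j) (h i) := hB₁.neg _ _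
    _ = -B₀ (h (j + 1)) (h i) := by rw [hrec', neg_neg]
    _ = B₀ (h i) (h (j + 1)) := hB₀.neg _ _

theorem lenard_bracket₀_eq_zero (hB₀ : B₀.IsAlt) (hB₁ : B₁.IsAlt)
    (hcas : ∀ f : M, B₀ (h 0) f = 0)
    (hrec : ∀ (j : ℕ) (f : M), B₀ (h (j + 1)) f + B₁ (h j) f = 0) (i j : ℕ) :
    B₀ (h i) (h j) = 0 := by
  induction i generalizing j with
  | zero => exact hcas (h j)
  | succ i ih => rw [lenard_succ_left_eq_succ_right hB₀ hB₁ hrec, ih]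

theorem lenard_bracket₁_eq_zero (hB₀ : B₀.IsAlt) (hB₁ : B₁.IsAlt)
    (hcas : ∀ f : M, B₀ (h 0) f = 0)
    (hrec : ∀ (j : ℕ) (f : M), B₀ (h (j + 1)) f + B₁ (h j) f = 0) (i j : ℕ) :
    B₁ (h i) (h j) = 0 := by
  simpa only [lenard_bracket₀_eq_zero hB₀ hB₁ hcas hrec, zero_add] using hrec i (h j)

end Lenard

/-- The Lenard scheme: if `B₀, B₁` are bilinear alternating brackets,
`h₀` is a Casimir of `B₀`, and the sequence `h` satisfies the Lenard
recursion `B₀(h_{j+1}, ·) + B₁(h_j, ·) = 0`, then all the `h_i` are in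
involution with respect to both brackets. -/
theorem lenard_scheme_involution
    {V W : Type*} [AddCommGroup V] [Module ℝ V] [AddCommGroup W] [Module ℝ W]
    (B₀ B₁ : V →ₗ[ℝ] V →ₗ[ℝ] W)
    (hB₀alt : ∀ x : V, B₀ x x = 0) (hB₁alt : ∀ x : V, B₁ x x = 0)
    (h : ℕ → V)
    (hcas : ∀ f : V, B₀ (h 0) f = 0)
    (hrec : ∀ (j : ℕ) (f : V), B₀ (h (j + 1)) f + B₁ (h j) f = 0) :
    ∀ i j : ℕ, B₀ (h i) (h j) = 0 ∧ B₁ (h i) (h j) = 0 := fun i j =>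
  ⟨lenard_bracket₀_eq_zero hB₀alt hB₁alt hcas hrec i j,
    lenard_bracket₁_eq_zero hB₀alt hB₁alt hcas hrec i j⟩
end

section
/- Let u : ℝ × ℝ → ℝ be infinitely differentiable and 2π-periodic in the second (space) variable, i.e. u(t, x+2π) = u(t,x) for all t, x, and suppose u solves the Camassa–Holm equation ∂_t u − ∂_t∂_x² u = −3·u·∂_x u + 2·(∂_x u)·(∂_x² u) + u·∂_x³ u + c·∂_x³ u for a real constant c. Then the H¹-energy t ↦ ∫₀^{2π} ( u(t,x)² + (∂_x u(t,x))² ) dx is constant on ℝ. -/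
open Real MeasureTheory

noncomputable def pX (f : ℝ × ℝ → ℝ) : ℝ × ℝ → ℝ := fun p => fderiv ℝ f p (0, 1)
noncomputable def pT (f : ℝ × ℝ → ℝ) : ℝ × ℝ → ℝ := fun p => fderiv ℝ f p (1, 0)

theorem pX_contDiff {f : ℝ × ℝ → ℝ} (hf : ContDiff ℝ (⊤ : ℕ∞) f) : ContDiff ℝ (⊤ : ℕ∞) (pX f) :=
  (hf.fderiv_right (by simp)).clm_apply contDiff_const

theorem pT_contDiff {f : ℝ × ℝ → ℝ} (hf : ContDiff ℝ (⊤ : ℕ∞) f) : ContDiff ℝ (⊤ : ℕ∞) (pT f) :=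
  (hf.fderiv_right (by simp)).clm_apply contDiff_const

theorem hasDerivAt_sliceX {f : ℝ × ℝ → ℝ} (hf : ContDiff ℝ (⊤ : ℕ∞) f) (t x : ℝ) :
    HasDerivAt (fun y => f (t, y)) (pX f (t, x)) x := by
  have h1 : HasDerivAt (fun y : ℝ => ((t, y) : ℝ × ℝ)) ((0 : ℝ), (1 : ℝ)) x :=
    (hasDerivAt_const x t).prodMk (hasDerivAt_id x)
  exact ((hf.differentiable (by simp) (t, x)).hasFDerivAt).comp_hasDerivAt x h1

theorem hasDerivAt_sliceT {f : ℝ × ℝ → ℝ} (hf : ContDiff ℝ (⊤ : ℕ∞) f) (t x : ℝ) :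
    HasDerivAt (fun s => f (s, x)) (pT f (t, x)) t := by
  have h1 : HasDerivAt (fun s : ℝ => ((s, x) : ℝ × ℝ)) ((1 : ℝ), (0 : ℝ)) t :=
    (hasDerivAt_id t).prodMk (hasDerivAt_const t x)
  exact ((hf.differentiable (by simp) (t, x)).hasFDerivAt).comp_hasDerivAt t h1

theorem pT_pX_swap {f : ℝ × ℝ → ℝ} (hf : ContDiff ℝ (⊤ : ℕ∞) f) : pT (pX f) = pX (pT f) := by
  funext p
  have hd : ∀ q, HasFDerivAt (fderiv ℝ f) (fderiv ℝ (fderiv ℝ f) q) q := fun q =>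
    ((hf.fderiv_right (m := 1) (by exact WithTop.coe_le_coe.mpr le_top)).differentiable one_ne_zero q).hasFDerivAt
  have key : ∀ v : ℝ × ℝ, HasFDerivAt (fun q => fderiv ℝ f q v)
      ((ContinuousLinearMap.apply ℝ ℝ v).comp (fderiv ℝ (fderiv ℝ f) p)) p := fun v =>
    (ContinuousLinearMap.apply ℝ ℝ v).hasFDerivAt.comp p (hd p)
  have hsymm := (hf.contDiffAt (x := p)).isSymmSndFDerivAt (by rw [minSmoothness_of_isRCLikeNormedField]; exact WithTop.coe_le_coe.mpr (le_top : (2 : ℕ∞) ≤ ⊤))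
  show fderiv ℝ (pX f) p (1, 0) = fderiv ℝ (pT f) p (0, 1)
  rw [show pX f = fun q => fderiv ℝ f q (0, 1) from rfl,
      show pT f = fun q => fderiv ℝ f q (1, 0) from rfl,
      (key (0, 1)).fderiv, (key (1, 0)).fderiv]
  exact hsymm _ _

theorem periodic_deriv' {g : ℝ → ℝ} (hg : ∀ y, g (y + 2 * π) = g y) (x : ℝ) :
    deriv g (x + 2 * π) = deriv g x := by
  have h := deriv_comp_add_const g (2 * π) x
  rw [← h]
  congr 1
  funext y
  rw [hg y]

theorem pX_periodic {f : ℝ × ℝ → ℝ} (hf : ContDiff ℝ (⊤ : ℕ∞) f)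
    (hp : ∀ t x, f (t, x + 2 * π) = f (t, x)) (t x : ℝ) :
    pX f (t, x + 2 * π) = pX f (t, x) := by
  rw [← (hasDerivAt_sliceX hf t (x + 2 * π)).deriv, ← (hasDerivAt_sliceX hf t x).deriv]
  exact periodic_deriv' (fun y => hp t y) x

theorem pT_periodic {f : ℝ × ℝ → ℝ} (hf : ContDiff ℝ (⊤ : ℕ∞) f)
    (hp : ∀ t x, f (t, x + 2 * π) = f (t, x)) (t x : ℝ) :
    pT f (t, x + 2 * π) = pT f (t, x) := by
  rw [← (hasDerivAt_sliceT hf t (x + 2 * π)).deriv, ← (hasDerivAt_sliceT hf t x).deriv]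
  congr 1
  funext s
  rw [hp s x]

theorem my_integral_swap {f : ℝ → ℝ → ℝ} (hf : Continuous fun p : ℝ × ℝ => f p.1 p.2)
    {a b c d : ℝ} (hab : a ≤ b) (hcd : c ≤ d) :
    ∫ x in a..b, ∫ y in c..d, f x y = ∫ y in c..d, ∫ x in a..b, f x y := by
  have hint : Integrable (Function.uncurry f)
      ((volume.restrict (Set.Ioc a b)).prod (volume.restrict (Set.Ioc c d))) := by
    rw [Measure.prod_restrict]
    refine IntegrableOn.mono_set ?_
      (Set.prod_mono Set.Ioc_subset_Icc_self Set.Ioc_subset_Icc_self)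
    rw [← Measure.volume_eq_prod]
    exact hf.continuousOn.integrableOn_compact (isCompact_Icc.prod isCompact_Icc)
  simp_rw [intervalIntegral.integral_of_le hab, intervalIntegral.integral_of_le hcd]
  exact integral_integral_swap hint

noncomputable def FF (u : ℝ × ℝ → ℝ) (c : ℝ) : ℝ × ℝ → ℝ := fun p =>
  2 * u p * pX (pT u) p - 2 * u p ^ 3 + 2 * u p ^ 2 * pX (pX u) p
    + 2 * c * u p * pX (pX u) p - c * (pX u p) ^ 2


/-- For a spatially 2π-periodic smooth solution of the Camassa–Holm equation
`u_t − u_{txx} = −3uu_x + 2u_x u_{xx} + u u_{xxx} + c·u_{xxx}`,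
the `H¹`-energy `∫₀^{2π} (u² + u_x²) dx` is conserved. -/
theorem camassa_holm_conserves_H1_energy
    (u : ℝ × ℝ → ℝ) (c : ℝ)
    (hu : ContDiff ℝ (⊤ : ℕ∞) u)
    (hper : ∀ t x : ℝ, u (t, x + 2 * π) = u (t, x))
    (hch : ∀ t x : ℝ,
      deriv (fun s => u (s, x)) t
        - deriv (fun s => iteratedDeriv 2 (fun y => u (s, y)) x) t
      = -3 * u (t, x) * deriv (fun y => u (t, y)) x
        + 2 * deriv (fun y => u (t, y)) x * iteratedDeriv 2 (fun y => u (t, y)) x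
        + u (t, x) * iteratedDeriv 3 (fun y => u (t, y)) x
        + c * iteratedDeriv 3 (fun y => u (t, y)) x) :
    ∀ t₁ t₂ : ℝ,
      (∫ x in (0:ℝ)..(2 * π),
        (u (t₁, x) ^ 2 + (deriv (fun y => u (t₁, y)) x) ^ 2))
      = ∫ x in (0:ℝ)..(2 * π),
        (u (t₂, x) ^ 2 + (deriv (fun y => u (t₂, y)) x) ^ 2) := by
  intro t₁ t₂
  wlog hle : t₁ ≤ t₂ generalizing t₁ t₂
  · exact (this t₂ t₁ (le_of_not_ge hle)).symm
  have hux : ContDiff ℝ (⊤ : ℕ∞) (pX u) := pX_contDiff hu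
  have huxx : ContDiff ℝ (⊤ : ℕ∞) (pX (pX u)) := pX_contDiff hux
  have hut : ContDiff ℝ (⊤ : ℕ∞) (pT u) := pT_contDiff hu
  have hutx : ContDiff ℝ (⊤ : ℕ∞) (pX (pT u)) := pX_contDiff hut
  have dX : ∀ (f : ℝ × ℝ → ℝ), ContDiff ℝ (⊤ : ℕ∞) f → ∀ t,
      deriv (fun y => f (t, y)) = fun x => pX f (t, x) :=
    fun f hf t => funext fun x => (hasDerivAt_sliceX hf t x).deriv
  have iter2 : ∀ t x, iteratedDeriv 2 (fun y => u (t, y)) x = pX (pX u) (t, x) := by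
    intro t x
    rw [show (2:ℕ) = 1 + 1 from rfl, iteratedDeriv_succ, iteratedDeriv_one, dX u hu t]
    exact (hasDerivAt_sliceX hux t x).deriv
  have iter3 : ∀ t x, iteratedDeriv 3 (fun y => u (t, y)) x = pX (pX (pX u)) (t, x) := by
    intro t x
    rw [show (3:ℕ) = 2 + 1 from rfl, iteratedDeriv_succ,
        show iteratedDeriv 2 (fun y => u (t, y)) = fun z => pX (pX u) (t, z)
          from funext (iter2 t)]
    exact (hasDerivAt_sliceX huxx t x).deriv
  have hch' : ∀ t x, pT u (t, x) - pX (pX (pT u)) (t, x)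
      = -3 * u (t, x) * pX u (t, x) + 2 * pX u (t, x) * pX (pX u) (t, x)
        + u (t, x) * pX (pX (pX u)) (t, x) + c * pX (pX (pX u)) (t, x) := by
    intro t x
    have h := hch t x
    rw [(hasDerivAt_sliceT hu t x).deriv,
        show (fun s => iteratedDeriv 2 (fun y => u (s, y)) x) = fun s => pX (pX u) (s, x)
          from funext fun s => iter2 s x,
        (hasDerivAt_sliceT huxx t x).deriv, pT_pX_swap hux, pT_pX_swap hu,
        (hasDerivAt_sliceX hu t x).deriv, iter2 t x, iter3 t x] at h
    exact h
  have pux := pX_periodic hu hper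
  have puxx := pX_periodic hux pux
  have put := pT_periodic hu hper
  have putx := pX_periodic hut put
  have pF : ∀ t x, FF u c (t, x + 2 * π) = FF u c (t, x) := by
    intro t x
    simp only [FF, hper, pux, puxx, putx]
  have hFderiv : ∀ t x, HasDerivAt (fun y => FF u c (t, y))
      (2 * u (t, x) * pT u (t, x) + 2 * pX u (t, x) * pX (pT u) (t, x)) x := by
    intro t x
    have Hu := hasDerivAt_sliceX hu t x
    have Hux := hasDerivAt_sliceX hux t x
    have Huxx := hasDerivAt_sliceX huxx t x
    have Hutx := hasDerivAt_sliceX hutx t x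
    have HF := (((((Hu.const_mul (2:ℝ)).mul Hutx).sub ((Hu.pow 3).const_mul 2)).add
        (((Hu.pow 2).const_mul 2).mul Huxx)).add ((Hu.const_mul (2*c)).mul Huxx)).sub
        ((Hux.pow 2).const_mul c)
    refine HF.congr_deriv ?_
    push_cast
    simp only [Pi.pow_apply]
    linear_combination (-(2 * u (t, x))) * hch' t x
  have hgderiv : ∀ t x, HasDerivAt (fun s => u (s, x) ^ 2 + pX u (s, x) ^ 2)
      (2 * u (t, x) * pT u (t, x) + 2 * pX u (t, x) * pX (pT u) (t, x)) t := by
    intro t x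
    have H := ((hasDerivAt_sliceT hu t x).pow 2).add ((hasDerivAt_sliceT hux t x).pow 2)
    refine H.congr_deriv ?_
    rw [pT_pX_swap hu]
    push_cast
    ring
  have hHcont : Continuous (fun p : ℝ × ℝ => 2 * u p * pT u p + 2 * pX u p * pX (pT u) p) :=
    ((continuous_const.mul hu.continuous).mul hut.continuous).add
      ((continuous_const.mul hux.continuous).mul hutx.continuous)
  have hinner : ∀ t, (∫ x in (0:ℝ)..(2 * π),
      (2 * u (t, x) * pT u (t, x) + 2 * pX u (t, x) * pX (pT u) (t, x))) = 0 := by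
    intro t
    rw [intervalIntegral.integral_eq_sub_of_hasDerivAt (fun x _ => hFderiv t x)
      ((hHcont.comp (continuous_const.prodMk continuous_id)).intervalIntegrable 0 (2 * π))]
    rw [show (2 * π : ℝ) = 0 + 2 * π by ring, pF t 0, sub_self]
  have hftc : ∀ x, (∫ s in t₁..t₂,
      (2 * u (s, x) * pT u (s, x) + 2 * pX u (s, x) * pX (pT u) (s, x)))
      = (u (t₂, x) ^ 2 + pX u (t₂, x) ^ 2) - (u (t₁, x) ^ 2 + pX u (t₁, x) ^ 2) :=
    fun x => intervalIntegral.integral_eq_sub_of_hasDerivAt (fun s _ => hgderiv s x)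
      ((hHcont.comp (continuous_id.prodMk continuous_const)).intervalIntegrable t₁ t₂)
  have gint : ∀ t, (∫ x in (0:ℝ)..(2 * π),
      (u (t, x) ^ 2 + (deriv (fun y => u (t, y)) x) ^ 2))
      = ∫ x in (0:ℝ)..(2 * π), (u (t, x) ^ 2 + pX u (t, x) ^ 2) := by
    intro t
    simp only [dX u hu t]
  rw [gint t₁, gint t₂]
  have intt : ∀ t, IntervalIntegrable (fun x => u (t, x) ^ 2 + pX u (t, x) ^ 2)
      volume 0 (2 * π) := fun t =>
    (((hu.continuous.comp (continuous_const.prodMk continuous_id)).pow 2).add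
      ((hux.continuous.comp (continuous_const.prodMk continuous_id)).pow 2)).intervalIntegrable
      0 (2 * π)
  have hsplit : (∫ x in (0:ℝ)..(2 * π), (u (t₂, x) ^ 2 + pX u (t₂, x) ^ 2))
      - (∫ x in (0:ℝ)..(2 * π), (u (t₁, x) ^ 2 + pX u (t₁, x) ^ 2))
      = ∫ x in (0:ℝ)..(2 * π),
        ((u (t₂, x) ^ 2 + pX u (t₂, x) ^ 2) - (u (t₁, x) ^ 2 + pX u (t₁, x) ^ 2)) :=
    (intervalIntegral.integral_sub (intt t₂) (intt t₁)).symm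
  have hcongr : (∫ x in (0:ℝ)..(2 * π),
        ((u (t₂, x) ^ 2 + pX u (t₂, x) ^ 2) - (u (t₁, x) ^ 2 + pX u (t₁, x) ^ 2)))
      = ∫ x in (0:ℝ)..(2 * π), ∫ s in t₁..t₂,
        (2 * u (s, x) * pT u (s, x) + 2 * pX u (s, x) * pX (pT u) (s, x)) :=
    intervalIntegral.integral_congr (fun x _ => (hftc x).symm)
  have hswap := my_integral_swap
    (f := fun x s => 2 * u (s, x) * pT u (s, x) + 2 * pX u (s, x) * pX (pT u) (s, x))
    (hHcont.comp continuous_swap) (by linarith [Real.pi_pos] : (0:ℝ) ≤ 2 * π) hle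
  have hzero : (∫ s in t₁..t₂, (∫ x in (0:ℝ)..(2 * π),
      (2 * u (s, x) * pT u (s, x) + 2 * pX u (s, x) * pX (pT u) (s, x)))) = 0 := by
    rw [intervalIntegral.integral_congr (g := fun _ => (0:ℝ)) (fun s _ => hinner s)]
    simp
  have key := hsplit.trans (hcongr.trans (hswap.trans hzero))
  linarith [key]
end
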